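/- arXiv:0801.1214 — 2 statements merged into one kernel-verified Lean document; each statement's English description precedes it below -/
import Mathlib

section
/- Let A be a local integral domain with fraction field K, and let B be a local subring of K containing A (so A ⊆ B ⊆ K). If B, regarded as an A-module via the inclusion A ⊆ B, is flat over A, and the inclusion A ⊆ B is a local ring homomorphism (it maps the maximal ideal of A into the maximal ideal of B), then A = B. -/
namespace RingHom.FaithfullyFlat

variable {R S : Type*} [CommRing R] [CommRing S] {f : R →+* S}

lemma of_flat_of_isLocalHom [IsLocalRing R] [IsLocalRing S] [IsLocalHom f] (hf : f.Flat) :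
    f.FaithfullyFlat := by
  algebraize [f]
  exact Module.FaithfullyFlat.of_flat_of_isLocalHom

/-- Faithful flatness makes the contraction of an extended ideal the ideal itself. -/
lemma dvd_of_map_dvd (hf : f.FaithfullyFlat) {s a : R} (h : f s ∣ f a) : s ∣ a := by
  algebraize [f]
  rw [← Ideal.mem_span_singleton,
    ← Ideal.comap_map_eq_self_of_faithfullyFlat (B := S) (Ideal.span {s}), Ideal.mem_comap,
    Ideal.map_span, Set.image_singleton, Ideal.mem_span_singleton]
  exact h

end RingHom.FaithfullyFlat

/-- Write `b ∈ B` as `a / s` with `a, s ∈ A`: then `s ∣ a` in `B`, hence in `A`. -/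
theorem Subring.eq_of_faithfullyFlat_inclusion {K : Type*} [Field K] (A B : Subring K)
    [IsFractionRing A K] (hAB : A ≤ B) (hf : (Subring.inclusion hAB).FaithfullyFlat) :
    A = B := by
  refine le_antisymm hAB fun b hb => ?_
  obtain ⟨⟨a, s⟩, hs⟩ := IsLocalization.surj (nonZeroDivisors A) b
  have hsa : (b : K) * (s : A) = (a : A) := hs
  obtain ⟨c, rfl⟩ : (s : A) ∣ a := hf.dvd_of_map_dvd ⟨⟨b, hb⟩, Subtype.ext <| by
    simp [Subring.inclusion, ← hsa, mul_comm]⟩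
  have hs0 : ((s : A) : K) ≠ 0 := by simp
  have hbc : b = c := by
    apply mul_right_cancel₀ hs0
    rw [hsa]
    push_cast
    ring
  exact hbc ▸ c.2

/-- Commutative-algebra core of steps 5–6 of the proof of Theorem 2 of the paper:
if `A` is a local integral domain with fraction field `K`, and `B` is a local
subring of `K` with `A ⊆ B ⊆ K` such that the inclusion `A ⊆ B` is a flat local
ring homomorphism, then `A = B`. -/
theorem eq_of_flat_local_subring_of_fractionRing
    {K : Type*} [Field K] (A B : Subring K)
    [IsLocalRing A] [IsLocalRing B] [IsFractionRing A K]
    (hAB : A ≤ B)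
    (hflat : (Subring.inclusion hAB).Flat)
    (hlocal : IsLocalHom (Subring.inclusion hAB)) :
    A = B :=
  Subring.eq_of_faithfullyFlat_inclusion A B hAB (.of_flat_of_isLocalHom hflat)
end

section
/- Let f : X ⟶ Y be a morphism of integral schemes which is flat (for every point x of X the induced ring homomorphism on stalks O_{Y,f(x)} → O_{X,x} is flat) and birational (there exist dense open subschemes U ⊆ X and V ⊆ Y such that f restricts to an isomorphism from U onto V). Then for every point x of X, the induced homomorphism on stalks O_{Y,f(x)} → O_{X,x} is an isomorphism. -/
open AlgebraicGeometry CategoryTheory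

/-! Since `U` is dense, it contains the generic point of `X`, and there `f` is an open immersion:
`f` maps generic point to generic point and identifies the function fields. So every element
`b` of `B = 𝒪_{X,x}` satisfies `q b = p` for some `p, q` in `A = 𝒪_{Y,f x}` with `q ≠ 0` in `B`.
A flat local homomorphism of local rings is faithfully flat, so `qB ∩ A = qA`; hence `p = q a`
for some `a ∈ A`, and cancelling `q` in the domain `B` gives `b = a`. -/

theorem Module.FaithfullyFlat.exists_algebraMap_eq_of_mul_eq {A B : Type*} [CommRing A]
    [CommRing B] [Algebra A B] [Module.FaithfullyFlat A B] {p q : A} {b : B}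
    (hq : IsLeftRegular (algebraMap A B q)) (h : algebraMap A B q * b = algebraMap A B p) :
    ∃ a, algebraMap A B a = b := by
  have hp : p ∈ ((Ideal.span {q}).map (algebraMap A B)).comap (algebraMap A B) := by
    rw [Ideal.mem_comap, Ideal.map_span, Set.image_singleton, Ideal.mem_span_singleton']
    exact ⟨b, by rw [mul_comm, h]⟩
  rw [Ideal.comap_map_eq_self_of_faithfullyFlat, Ideal.mem_span_singleton'] at hp
  obtain ⟨a, rfl⟩ := hp
  exact ⟨a, hq.eq_iff.mp (by rw [h, map_mul, mul_comm])⟩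

theorem RingHom.bijective_of_flat_of_forall_exists_mul_eq {A B : Type*} [CommRing A] [CommRing B]
    [IsLocalRing A] [IsLocalRing B] (φ : A →+* B) [IsLocalHom φ] (hφ : φ.Flat)
    (hfrac : ∀ b, ∃ p q, IsLeftRegular (φ q) ∧ φ q * b = φ p) : Function.Bijective φ := by
  algebraize [φ]
  have : Module.FaithfullyFlat A B := .of_flat_of_isLocalHom
  refine ⟨FaithfulSMul.algebraMap_injective A B, fun b => ?_⟩
  obtain ⟨p, q, hq, h⟩ := hfrac b
  exact Module.FaithfullyFlat.exists_algebraMap_eq_of_mul_eq hq h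

theorem AlgebraicGeometry.Scheme.Hom.map_genericPoint_of_isOpenImmersion_comp {Z X Y : Scheme}
    [IrreducibleSpace Z] [IrreducibleSpace X] [IrreducibleSpace Y] (f : X ⟶ Y) (g : Z ⟶ X)
    [IsOpenImmersion g] [IsOpenImmersion (g ≫ f)] :
    f (genericPoint X) = genericPoint Y := by
  rw [← genericPoint_eq_of_isOpenImmersion g, ← Scheme.Hom.comp_apply,
    genericPoint_eq_of_isOpenImmersion]

theorem AlgebraicGeometry.Scheme.Hom.isIso_stalkMap_of_isOpenImmersion_comp {Z X Y : Scheme}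
    (f : X ⟶ Y) (g : Z ⟶ X) [IsOpenImmersion g] [IsOpenImmersion (g ≫ f)] (z : Z) :
    IsIso (f.stalkMap (g z)) := by
  have : IsIso (f.stalkMap (g z) ≫ g.stalkMap z) := by
    rw [← Scheme.Hom.stalkMap_comp]
    exact inferInstanceAs (IsIso ((g ≫ f).stalkMap z))
  exact IsIso.of_isIso_comp_right _ (g.stalkMap z)

/-- The point `y'` is a variable so that this applies to stalks at points that are only
propositionally equal to the generic point, such as `f (genericPoint X)`. -/
theorem AlgebraicGeometry.Scheme.exists_mul_stalkSpecializes_eq (Y : Scheme) [IsIntegral Y]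
    {y' y : Y} (hy' : y' = genericPoint Y) (h : y' ⤳ y) (k : Y.presheaf.stalk y') :
    ∃ p q, Y.presheaf.stalkSpecializes h q ≠ 0 ∧
      k * Y.presheaf.stalkSpecializes h q = Y.presheaf.stalkSpecializes h p := by
  subst hy'
  obtain ⟨⟨p, q⟩, hk⟩ := IsLocalization.surj (nonZeroDivisors (Y.presheaf.stalk y))
    (k : Y.functionField)
  exact ⟨p, q, IsFractionRing.to_map_ne_zero_of_mem_nonZeroDivisors q.2, hk⟩

theorem AlgebraicGeometry.Scheme.Hom.exists_stalkMap_mul_eq {X Y : Scheme} [IsIntegral X]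
    [IsIntegral Y] (f : X ⟶ Y) (hgen : f (genericPoint X) = genericPoint Y)
    [IsIso (f.stalkMap (genericPoint X))] (x : X) (b : X.presheaf.stalk x) :
    ∃ p q, f.stalkMap x q ≠ 0 ∧ f.stalkMap x q * b = f.stalkMap x p := by
  have hspec : genericPoint X ⤳ x := genericPoint_specializes x
  let ψ := f.stalkMap (genericPoint X)
  have hψ : Function.Bijective ψ := ConcreteCategory.bijective_of_isIso ψ
  have hsq := f.stalkSpecializes_stalkMap_apply _ _ hspec
  let i := X.presheaf.stalkSpecializes hspec
  have hi : Function.Injective i := IsFractionRing.injective (X.presheaf.stalk x) X.functionField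
  obtain ⟨k, hk⟩ := hψ.2 (i b)
  obtain ⟨p, q, hq, hpq⟩ := Y.exists_mul_stalkSpecializes_eq hgen
    (f.base.hom.map_specializes hspec) k
  refine ⟨p, q, fun h0 => hq (hψ.1 ?_), hi ?_⟩
  · rw [hsq, h0, map_zero, map_zero]
  · rw [map_mul, ← hsq, ← hsq, ← hk, ← map_mul, mul_comm, hpq]

/-- Scheme-theoretic content of steps 5–7 of the proof of Theorem 2 of the paper:
a flat birational morphism of integral schemes induces an isomorphism on every stalk. -/
theorem stalkMap_isIso_of_flat_birational
    {X Y : Scheme.{u}} [IsIntegral X] [IsIntegral Y] (f : X ⟶ Y)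
    (hflat : ∀ x : X, (f.stalkMap x).hom.Flat)
    (hbir : ∃ (U : X.Opens) (V : Y.Opens), Dense (U : Set X) ∧ Dense (V : Set Y) ∧
      ∃ e : U.toScheme ≅ V.toScheme, e.hom ≫ V.ι = U.ι ≫ f) :
    ∀ x : X, IsIso (f.stalkMap x) := by
  obtain ⟨U, V, hU, -, e, he⟩ := hbir
  have : Nonempty U := hU.nonempty.to_subtype
  have : IsOpenImmersion (U.ι ≫ f) := he ▸ inferInstance
  have hgen := f.map_genericPoint_of_isOpenImmersion_comp U.ι
  have : IsIso (f.stalkMap (genericPoint X)) := by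
    rw [← genericPoint_eq_of_isOpenImmersion U.ι]
    exact f.isIso_stalkMap_of_isOpenImmersion_comp U.ι (genericPoint U)
  intro x
  rw [ConcreteCategory.isIso_iff_bijective]
  refine (f.stalkMap x).hom.bijective_of_flat_of_forall_exists_mul_eq (hflat x) fun b => ?_
  obtain ⟨p, q, hq, h⟩ := f.exists_stalkMap_mul_eq hgen x b
  exact ⟨p, q, IsLeftCancelMulZero.mul_left_cancel_of_ne_zero hq, h⟩
end
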